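/- arXiv:math/0604349 — 9 statements merged into one kernel-verified Lean document; each statement's English description precedes it below -/
import Mathlib

section
/- Let P and Q be orthogonal projections on a complex Hilbert space H. The range of the Sasaki arrow P ⇒ Q := P^⊥ ∨ (P ∧ Q) equals the set { ψ ∈ H : Pψ = (P ∧ Q)ψ }, where P ∧ Q denotes the orthogonal projection onto ran P ∩ ran Q; in particular this set is a closed linear subspace of H. -/
variable {H : Type} [NormedAddCommGroup H] [InnerProductSpace ℂ H] [CompleteSpace H]

/-- `P` is an orthogonal projection on `H`: self-adjoint and idempotent. -/
def IsOrthProj (P : H →L[ℂ] H) : Prop := IsSelfAdjoint P ∧ P * P = P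

/-!
Write `M = P ∧ Q`. Since `ran M ⊆ ran P` and both projections are self-adjoint, `PM = M = MP`.
Then `ran P^⊥ = ker P` and `ran M` both lie in `ker (P - M)`, and conversely every `ψ` with
`Pψ = Mψ` splits as `(ψ - Pψ) + Mψ`. So `ran P^⊥ + ran M = ker (P - M)` is already closed and
no closure is needed.
-/

open LinearMap

theorem LinearMap.ker_sup_range_eq_ker_sub {R E : Type*} [Ring R] [AddCommGroup E] [Module R E]
    {P M : E →ₗ[R] E} (hP : IsIdempotentElem P) (hM : IsIdempotentElem M) (hPM : P * M = M)
    (hMP : M * P = M) : ker P ⊔ range M = ker (P - M) := by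
  refine le_antisymm (sup_le (fun ψ hψ => ?_) ?_) (fun ψ hψ => ?_)
  · have hMψ : M ψ = 0 := by rw [← hMP, Module.End.mul_apply, mem_ker.mp hψ, map_zero]
    simp [mem_ker.mp hψ, hMψ]
  · rintro _ ⟨φ, rfl⟩
    simp only [mem_ker, sub_apply, ← Module.End.mul_apply, hPM, hM.eq, sub_self]
  · have hPψ : P ψ = M ψ := sub_eq_zero.mp hψ
    refine Submodule.mem_sup.mpr ⟨ψ - P ψ, ?_, M ψ, ⟨ψ, rfl⟩, by rw [← hPψ, sub_add_cancel]⟩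
    simp only [mem_ker, map_sub, ← Module.End.mul_apply, hP.eq, sub_self]

theorem ContinuousLinearMap.mul_eq_right_of_range_le {R E : Type*} [Ring R] [TopologicalSpace E]
    [AddCommGroup E] [Module R E] {P M : E →L[R] E} (hP : IsIdempotentElem P)
    (h : range (M : E →ₗ[R] E) ≤ range (P : E →ₗ[R] E)) : P * M = M :=
  coe_inj.mp <| ((IsIdempotentElem.toLinearMap hP).comp_eq_right_iff _).mpr h

theorem IsOrthProj.mul_eq_left_of_range_le {P M : H →L[ℂ] H} (hP : IsOrthProj P)
    (hM : IsSelfAdjoint M) (h : range (M : H →ₗ[ℂ] H) ≤ range (P : H →ₗ[ℂ] H)) : M * P = M := by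
  simpa [hP.1.star_eq, hM.star_eq] using
    congrArg star (ContinuousLinearMap.mul_eq_right_of_range_le hP.2 h)

theorem stmt2_general (P Q M : H →L[ℂ] H) (hP : IsOrthProj P)
    (hM : IsOrthProj M)
    (hMr : LinearMap.range (M : H →ₗ[ℂ] H) = LinearMap.range (P : H →ₗ[ℂ] H) ⊓
      LinearMap.range (Q : H →ₗ[ℂ] H)) :
    (((LinearMap.range ((1 - P : H →L[ℂ] H) : H →ₗ[ℂ] H) ⊔ (LinearMap.range (P : H →ₗ[ℂ] H) ⊓ LinearMap.range (Q : H →ₗ[ℂ] H))).topologicalClosure :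
        Submodule ℂ H) : Set H) = {ψ : H | P ψ = M ψ} ∧
      IsClosed {ψ : H | P ψ = M ψ} := by
  have hMle : range (M : H →ₗ[ℂ] H) ≤ range (P : H →ₗ[ℂ] H) := hMr ▸ inf_le_left
  have hPidem : IsIdempotentElem (P : H →ₗ[ℂ] H) :=
    ContinuousLinearMap.IsIdempotentElem.toLinearMap hP.2
  have hsup : range ((1 - P : H →L[ℂ] H) : H →ₗ[ℂ] H) ⊔ (range (P : H →ₗ[ℂ] H) ⊓
      range (Q : H →ₗ[ℂ] H)) = ker ((P - M : H →L[ℂ] H) : H →ₗ[ℂ] H) := by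
    rw [← hMr, ContinuousLinearMap.toLinearMap_sub, ContinuousLinearMap.toLinearMap_one,
      ← hPidem.ker_eq_range_one_sub]
    exact ker_sup_range_eq_ker_sub hPidem (ContinuousLinearMap.IsIdempotentElem.toLinearMap hM.2)
      (congrArg ContinuousLinearMap.toLinearMap
        (ContinuousLinearMap.mul_eq_right_of_range_le hP.2 hMle))
      (congrArg ContinuousLinearMap.toLinearMap (hP.mul_eq_left_of_range_le hM.1 hMle))
  have hset : (ker ((P - M : H →L[ℂ] H) : H →ₗ[ℂ] H) : Set H) = {ψ : H | P ψ = M ψ} := by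
    ext ψ
    simp [sub_eq_zero]
  have hclosed := (P - M).isClosed_ker
  rw [hsup, hclosed.submodule_topologicalClosure_eq, ← hset]
  exact ⟨rfl, hclosed⟩

/-- The range of the Sasaki arrow `P ⇒ Q = P^⊥ ∨ (P ∧ Q)`, i.e. the closed linear span of
`ran (1 - P) ∪ (ran P ∩ ran Q)`, equals `{ψ | Pψ = (P ∧ Q)ψ}`, where `M = P ∧ Q` is the
orthogonal projection onto `ran P ∩ ran Q`; in particular this set is closed. -/
theorem stmt2 (P Q M : H →L[ℂ] H) (hP : IsOrthProj P) (hQ : IsOrthProj Q)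
    (hM : IsOrthProj M)
    (hMr : LinearMap.range (M : H →ₗ[ℂ] H) = LinearMap.range (P : H →ₗ[ℂ] H) ⊓
      LinearMap.range (Q : H →ₗ[ℂ] H)) :
    (((LinearMap.range ((1 - P : H →L[ℂ] H) : H →ₗ[ℂ] H) ⊔ (LinearMap.range (P : H →ₗ[ℂ] H) ⊓ LinearMap.range (Q : H →ₗ[ℂ] H))).topologicalClosure :
        Submodule ℂ H) : Set H) = {ψ : H | P ψ = M ψ} ∧
      IsClosed {ψ : H | P ψ = M ψ} :=
  stmt2_general P Q M hP hM hMr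
end

section
/- Let P and Q be orthogonal projections on a complex Hilbert space H. The range of the Sasaki arrow P ⇒ Q := P^⊥ ∨ (P ∧ Q) equals the set { ψ ∈ H : Pψ ∈ ran Q }; in particular this set is a closed linear subspace of H. -/
/-!
For an idempotent `P` we have `ran (1 - P) = ker P`, and for every subspace `K`,
`ker P ⊔ (ran P ⊓ K) = P⁻¹ K`: the nontrivial inclusion comes from `ψ = (ψ - Pψ) + Pψ`.
The range of the idempotent `Q` is `ker (1 - Q)`, hence closed, so `P⁻¹ (ran Q)` is closed
and the closure in the Sasaki arrow adds nothing.
-/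

variable {H : Type} [NormedAddCommGroup H] [InnerProductSpace ℂ H] [CompleteSpace H]

namespace LinearMap.IsIdempotentElem

variable {R E : Type*} [Ring R] [AddCommGroup E] [Module R E]

theorem ker_sup_range_inf_eq_comap {p : E →ₗ[R] E} (hp : IsIdempotentElem p)
    (K : Submodule R E) : ker p ⊔ (range p ⊓ K) = K.comap p := by
  refine le_antisymm (sup_le (fun x hx => ?_) fun x ⟨⟨y, hy⟩, hxK⟩ => ?_) fun x hx => ?_
  · simp [Submodule.mem_comap, mem_ker.mp hx]
  · rw [Submodule.mem_comap, ← hy, ← Module.End.mul_apply, hp.eq, hy]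
    exact hxK
  · have hpx : p x ∈ range p ⊓ K := ⟨mem_range_self p x, hx⟩
    have hker : x - p x ∈ ker p := by
      rw [mem_ker, map_sub, ← Module.End.mul_apply, hp.eq, sub_self]
    simpa using Submodule.add_mem_sup hker hpx

end LinearMap.IsIdempotentElem

theorem IsOrthProj.isIdempotentElem {P : H →L[ℂ] H} (hP : IsOrthProj P) : IsIdempotentElem P :=
  hP.2

/-- The range of the Sasaki arrow `P ⇒ Q = P^⊥ ∨ (P ∧ Q)`, i.e. the closed linear span of
`ran (1 - P) ∪ (ran P ∩ ran Q)`, equals `{ψ | Pψ ∈ ran Q}`; in particular this set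
is a closed linear subspace of `H`. -/
theorem stmt3 (P Q : H →L[ℂ] H) (hP : IsOrthProj P) (hQ : IsOrthProj Q) :
    (((LinearMap.range ((1 - P : H →L[ℂ] H) : H →ₗ[ℂ] H) ⊔
      (LinearMap.range (P : H →ₗ[ℂ] H) ⊓ LinearMap.range (Q : H →ₗ[ℂ] H))).topologicalClosure :
        Submodule ℂ H) : Set H) = {ψ : H | P ψ ∈ LinearMap.range (Q : H →ₗ[ℂ] H)} ∧
      IsClosed {ψ : H | P ψ ∈ LinearMap.range (Q : H →ₗ[ℂ] H)} := by
  have hP' := ContinuousLinearMap.IsIdempotentElem.toLinearMap hP.isIdempotentElem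
  have hclosed : IsClosed {ψ : H | P ψ ∈ LinearMap.range (Q : H →ₗ[ℂ] H)} :=
    (ContinuousLinearMap.IsIdempotentElem.isClosed_range hQ.isIdempotentElem).preimage P.continuous
  refine ⟨?_, hclosed⟩
  rw [ContinuousLinearMap.toLinearMap_sub, ContinuousLinearMap.toLinearMap_one,
    ← LinearMap.IsIdempotentElem.ker_eq_range_one_sub hP',
    LinearMap.IsIdempotentElem.ker_sup_range_inf_eq_comap hP', Submodule.topologicalClosure_coe]
  exact hclosed.closure_eq
end

section
/- Let P and Q be orthogonal projections on a complex Hilbert space H. Then P ⇔ Q := (P ⇒ Q) ∧ (Q ⇒ P) is the orthogonal projection onto the set { ψ ∈ H : Pψ = Qψ }; in particular this set is a closed linear subspace of H. -/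
/-!
Both Sasaki arrows only involve kernels and ranges of idempotents, and for an idempotent `P`
the subspace `ker P ⊔ (ran P ⊓ ran Q)` is exactly the preimage of `ran Q` under `P`, which is
closed. So `ran (P ⇔ Q) = {ψ | Pψ ∈ ran Q ∧ Qψ ∈ ran P}`, and for orthogonal projections this
means `Pψ = Qψ`: writing out `‖Pψ - Qψ‖²` and moving `P` and `Q` across the inner products
turns each cross term into `‖Pψ‖²` or `‖Qψ‖²`.
-/

variable {H : Type} [NormedAddCommGroup H] [InnerProductSpace ℂ H] [CompleteSpace H]

open LinearMap

theorem LinearMap.ker_sup_range_inf_eq_comap {R M : Type*} [Ring R] [AddCommGroup M] [Module R M]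
    {p : M →ₗ[R] M} (hp : IsIdempotentElem p) (V : Submodule R M) :
    ker p ⊔ (range p ⊓ V) = V.comap p := by
  refine le_antisymm (sup_le (fun x hx => ?_) (fun x hx => ?_)) (fun x hx => ?_)
  · simp [Submodule.mem_comap, mem_ker.mp hx]
  · obtain ⟨hxp, hxV⟩ := Submodule.mem_inf.mp hx
    rwa [Submodule.mem_comap, hp.mem_range_iff.mp hxp]
  · have hker : x - p x ∈ ker p := by
      simp [mem_ker, ← Module.End.mul_apply, hp.eq]
    simpa using Submodule.add_mem_sup hker (Submodule.mem_inf.mpr ⟨mem_range_self p x, hx⟩)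

section Sasaki

variable {R M : Type*} [Ring R] [TopologicalSpace M] [AddCommGroup M] [Module R M]
  [IsTopologicalAddGroup M] [ContinuousConstSMul R M]

/-- `P ⇒ Q = P^⊥ ∨ (P ∧ Q)` projects onto this subspace: the join of projections is the
closed span of their ranges. -/
def sasakiArrowRange (P Q : M →L[R] M) : Submodule R M :=
  (range ((1 - P : M →L[R] M) : M →ₗ[R] M) ⊔
    (range (P : M →ₗ[R] M) ⊓ range (Q : M →ₗ[R] M))).topologicalClosure

theorem sasakiArrowRange_eq_comap [T1Space M] {P Q : M →L[R] M} (hP : IsIdempotentElem P)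
    (hQ : IsIdempotentElem Q) :
    sasakiArrowRange P Q = (range (Q : M →ₗ[R] M)).comap (P : M →ₗ[R] M) := by
  have hP' := ContinuousLinearMap.IsIdempotentElem.toLinearMap hP
  rw [sasakiArrowRange, ContinuousLinearMap.toLinearMap_sub, ContinuousLinearMap.toLinearMap_one,
    ← hP'.ker_eq_range_one_sub, ker_sup_range_inf_eq_comap hP']
  exact IsClosed.submodule_topologicalClosure_eq
    ((ContinuousLinearMap.IsIdempotentElem.isClosed_range hQ).preimage P.continuous)

end Sasaki

section SymmetricProjection

variable {𝕜 E : Type*} [RCLike 𝕜] [NormedAddCommGroup E] [InnerProductSpace 𝕜 E]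
  {p q : E →ₗ[𝕜] E}

theorem LinearMap.IsSymmetricProjection.inner_apply_eq_of_apply_mem_range
    (hp : p.IsSymmetricProjection) (hq : q.IsSymmetricProjection) {x : E} (hx : p x ∈ range q) :
    inner 𝕜 (p x) (q x) = inner 𝕜 (p x) (p x) :=
  calc inner 𝕜 (p x) (q x)
    _ = inner 𝕜 (q (p x)) x := (hq.isSymmetric (p x) x).symm
    _ = inner 𝕜 (p (p x)) x := by
      rw [hq.isIdempotentElem.mem_range_iff.mp hx, hp.isIdempotentElem.mem_range_iff.mp
        (mem_range_self p x)]
    _ = inner 𝕜 (p x) (p x) := hp.isSymmetric (p x) x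

theorem LinearMap.IsSymmetricProjection.apply_eq_apply_iff
    (hp : p.IsSymmetricProjection) (hq : q.IsSymmetricProjection) (x : E) :
    p x = q x ↔ p x ∈ range q ∧ q x ∈ range p := by
  refine ⟨fun h => ⟨h ▸ mem_range_self q x, h ▸ mem_range_self p x⟩, fun ⟨hpx, hqx⟩ => ?_⟩
  have hpq := hp.inner_apply_eq_of_apply_mem_range hq hpx
  have hqp := hq.inner_apply_eq_of_apply_mem_range hp hqx
  have h0 : inner 𝕜 (p x - q x) (p x - q x) = 0 := by
    rw [inner_sub_sub_self, hpq, hqp]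
    ring
  exact sub_eq_zero.mp (inner_self_eq_zero.mp h0)

end SymmetricProjection

theorem IsOrthProj.isSymmetricProjection {P : H →L[ℂ] H} (hP : IsOrthProj P) :
    (P : H →ₗ[ℂ] H).IsSymmetricProjection :=
  ⟨ContinuousLinearMap.IsIdempotentElem.toLinearMap hP.2,
    ContinuousLinearMap.isSelfAdjoint_iff_isSymmetric.mp hP.1⟩

/-- `P ⇔ Q := (P ⇒ Q) ∧ (Q ⇒ P)` (with `⇒` the Sasaki arrow) is the orthogonal projection
onto `{ψ | Pψ = Qψ}`: the range of `P ⇔ Q`, i.e. the intersection of the ranges of the two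
Sasaki arrows, equals this set; in particular the set is a closed linear subspace of `H`. -/
theorem stmt4 (P Q : H →L[ℂ] H) (hP : IsOrthProj P) (hQ : IsOrthProj Q) :
    ((((LinearMap.range ((1 - P : H →L[ℂ] H) : H →ₗ[ℂ] H) ⊔ (LinearMap.range ((P : H →L[ℂ] H) : H →ₗ[ℂ] H) ⊓ LinearMap.range ((Q : H →L[ℂ] H) : H →ₗ[ℂ] H))).topologicalClosure ⊓
        (LinearMap.range ((1 - Q : H →L[ℂ] H) : H →ₗ[ℂ] H) ⊔ (LinearMap.range ((Q : H →L[ℂ] H) : H →ₗ[ℂ] H) ⊓ LinearMap.range ((P : H →L[ℂ] H) : H →ₗ[ℂ] H))).topologicalClosure :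
        Submodule ℂ H)) : Set H) = {ψ : H | P ψ = Q ψ} ∧
      IsClosed {ψ : H | P ψ = Q ψ} := by
  change ((sasakiArrowRange P Q ⊓ sasakiArrowRange Q P : Submodule ℂ H) : Set H) = _ ∧ _
  rw [sasakiArrowRange_eq_comap hP.2 hQ.2, sasakiArrowRange_eq_comap hQ.2 hP.2]
  refine ⟨Set.ext fun ψ => ?_, isClosed_eq P.continuous Q.continuous⟩
  exact (hP.isSymmetricProjection.apply_eq_apply_iff hQ.isSymmetricProjection ψ).symm
end

section
/- Let P₁, P₂, Q be orthogonal projections on a complex Hilbert space H. Then ran Q is contained in the range of the Sasaki arrow P₁ ⇒ P₂ := P₁^⊥ ∨ (P₁ ∧ P₂) if and only if the closure of the range of the operator P₁Q is contained in ran P₂. -/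
variable {H : Type} [NormedAddCommGroup H] [InnerProductSpace ℂ H] [CompleteSpace H]

/-!
For an idempotent `P`, the decomposition `x = (1 - P) x + P x` shows that
`ran (1 - P) ⊔ (ran P ⊓ K)` is exactly the preimage `P⁻¹ K`. When `K = ran P₂` is closed, so is
this preimage, hence the closure in the Sasaki arrow is harmless, and `ran Q ≤ P₁⁻¹ (ran P₂)`
says precisely that `P₁ (ran Q) = ran (P₁ Q)` lies in the closed subspace `ran P₂`.
-/

theorem LinearMap.IsIdempotentElem.comap_eq_range_one_sub_sup {R M : Type*} [Ring R]
    [AddCommGroup M] [Module R M] {p : M →ₗ[R] M} (hp : IsIdempotentElem p)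
    (K : Submodule R M) :
    K.comap p = range (1 - p) ⊔ (range p ⊓ K) := by
  apply le_antisymm
  · intro x hx
    have hdecomp : (1 - p) x + p x = x := by simp
    rw [← hdecomp]
    exact Submodule.add_mem_sup (mem_range_self _ x) ⟨mem_range_self p x, hx⟩
  · refine sup_le ?_ fun x ⟨hxp, hxK⟩ => ?_
    · rw [← LinearMap.IsIdempotentElem.ker_eq_range_one_sub hp]
      intro x hx
      simp [mem_ker.mp hx]
    · rwa [Submodule.mem_comap, (LinearMap.IsIdempotentElem.mem_range_iff hp).mp hxp]

theorem ContinuousLinearMap.IsIdempotentElem.topologicalClosure_range_one_sub_sup {R M : Type*}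
    [Ring R] [TopologicalSpace M] [AddCommGroup M] [Module R M] [IsTopologicalAddGroup M]
    [ContinuousConstSMul R M] {P : M →L[R] M} (hP : IsIdempotentElem P) {K : Submodule R M}
    (hK : IsClosed (K : Set M)) :
    (LinearMap.range ((1 - P : M →L[R] M) : M →ₗ[R] M) ⊔
        (LinearMap.range (P : M →ₗ[R] M) ⊓ K)).topologicalClosure =
      K.comap (P : M →ₗ[R] M) := by
  rw [ContinuousLinearMap.toLinearMap_sub, ContinuousLinearMap.toLinearMap_one,
    ← LinearMap.IsIdempotentElem.comap_eq_range_one_sub_sup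
      (ContinuousLinearMap.IsIdempotentElem.toLinearMap hP)]
  exact (hK.preimage P.continuous).submodule_topologicalClosure_eq

theorem Submodule.topologicalClosure_le_iff {R M : Type*} [Semiring R] [TopologicalSpace M]
    [AddCommMonoid M] [Module R M] [ContinuousAdd M] [ContinuousConstSMul R M]
    {s t : Submodule R M} (ht : IsClosed (t : Set M)) :
    s.topologicalClosure ≤ t ↔ s ≤ t :=
  ⟨(s.le_topologicalClosure).trans, fun h => s.topologicalClosure_minimal h ht⟩

theorem stmt5_general (P₁ P₂ Q : H →L[ℂ] H) (h1 : IsOrthProj P₁) (h2 : IsOrthProj P₂) :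
    LinearMap.range (Q : H →ₗ[ℂ] H) ≤
        (LinearMap.range ((1 - P₁ : H →L[ℂ] H) : H →ₗ[ℂ] H) ⊔ (LinearMap.range (P₁ : H →ₗ[ℂ] H) ⊓ LinearMap.range (P₂ : H →ₗ[ℂ] H))).topologicalClosure
      ↔ (LinearMap.range ((P₁ * Q : H →L[ℂ] H) : H →ₗ[ℂ] H)).topologicalClosure ≤ LinearMap.range (P₂ : H →ₗ[ℂ] H) := by
  have hclosed := ContinuousLinearMap.IsIdempotentElem.isClosed_range h2.2
  rw [ContinuousLinearMap.IsIdempotentElem.topologicalClosure_range_one_sub_sup h1.2 hclosed,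
    ← Submodule.map_le_iff_le_comap, Submodule.topologicalClosure_le_iff hclosed,
    ContinuousLinearMap.toLinearMap_mul, Module.End.mul_eq_comp, LinearMap.range_comp]

/-- `ran Q` is contained in the range of the Sasaki arrow
`P₁ ⇒ P₂ = P₁^⊥ ∨ (P₁ ∧ P₂)` (the closed linear span of `ran (1 - P₁) ∪ (ran P₁ ∩ ran P₂)`)
if and only if the closure of the range of `P₁Q` is contained in `ran P₂`. -/
theorem stmt5 (P₁ P₂ Q : H →L[ℂ] H) (h1 : IsOrthProj P₁) (h2 : IsOrthProj P₂)
    (hQ : IsOrthProj Q) :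
    LinearMap.range (Q : H →ₗ[ℂ] H) ≤
        (LinearMap.range ((1 - P₁ : H →L[ℂ] H) : H →ₗ[ℂ] H) ⊔ (LinearMap.range (P₁ : H →ₗ[ℂ] H) ⊓ LinearMap.range (P₂ : H →ₗ[ℂ] H))).topologicalClosure
      ↔ (LinearMap.range ((P₁ * Q : H →L[ℂ] H) : H →ₗ[ℂ] H)).topologicalClosure ≤ LinearMap.range (P₂ : H →ₗ[ℂ] H) :=
  stmt5_general P₁ P₂ Q h1 h2
end

section
/- Let P and Q be orthogonal projections on a complex Hilbert space H. The closure of the range of the operator PQ equals ran P ∩ (closed linear span of (ran P)^⊥ ∪ ran Q); equivalently, the orthogonal projection onto the closure of ran(PQ) is P ∧ (P^⊥ ∨ Q). -/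
/-!
Since `P (1 - P) = 0`, the map `P` sends `ran (1 - P) + ran Q` onto `ran (PQ)`; by continuity it
sends the closure of that sum into the closure of `ran (PQ)`, and it fixes `ran P` pointwise.
Conversely `PQ = Q - (1 - P) Q` puts `ran (PQ)` inside the sum, and `ran P` is closed.
-/

variable {H : Type} [NormedAddCommGroup H] [InnerProductSpace ℂ H] [CompleteSpace H]

open LinearMap

namespace LinearMap

variable {R M : Type*} [Ring R] [AddCommGroup M] [Module R M]

theorem range_mul_le_range_one_sub_sup_range (P Q : Module.End R M) :
    range (P * Q) ≤ range (1 - P) ⊔ range Q := by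
  rintro _ ⟨y, rfl⟩
  have hsplit : (P * Q) y = Q y - (1 - P) (Q y) := by simp
  rw [hsplit]
  exact Submodule.sub_mem _ (Submodule.mem_sup_right ⟨y, rfl⟩)
    (Submodule.mem_sup_left ⟨Q y, rfl⟩)

theorem map_range_one_sub_sup_range {P : Module.End R M} (hP : IsIdempotentElem P)
    (Q : Module.End R M) : (range (1 - P) ⊔ range Q).map P = range (P * Q) := by
  rw [Submodule.map_sup, ← range_comp, ← range_comp, ← Module.End.mul_eq_comp,
    ← Module.End.mul_eq_comp, hP.mul_one_sub_self, range_zero, bot_sup_eq]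

end LinearMap

namespace ContinuousLinearMap

variable {R M : Type*} [Ring R] [AddCommGroup M] [Module R M] [TopologicalSpace M]
  [IsTopologicalAddGroup M] [ContinuousConstSMul R M] [T1Space M]

theorem topologicalClosure_range_mul {P : M →L[R] M} (hP : IsIdempotentElem P) (Q : M →L[R] M) :
    (range ((P * Q : M →L[R] M) : M →ₗ[R] M)).topologicalClosure
      = range (P : M →ₗ[R] M) ⊓
        (range ((1 - P : M →L[R] M) : M →ₗ[R] M) ⊔ range (Q : M →ₗ[R] M)).topologicalClosure := by
  rw [toLinearMap_mul, toLinearMap_sub, toLinearMap_one]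
  apply le_antisymm
  · refine Submodule.topologicalClosure_minimal _ (le_inf (range_comp_le_range _ _) ?_)
      ((IsIdempotentElem.isClosed_range hP).inter (Submodule.isClosed_topologicalClosure _))
    exact (range_mul_le_range_one_sub_sup_range _ _).trans (Submodule.le_topologicalClosure _)
  · rintro x ⟨hxP, hxS⟩
    have hPlin : IsIdempotentElem (P : M →ₗ[R] M) := IsIdempotentElem.toLinearMap hP
    rw [← hPlin.mem_range_iff.mp hxP, ← map_range_one_sub_sup_range hPlin]
    exact map_mem_closure P.continuous hxS fun y hy ↦ ⟨y, hy, rfl⟩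

end ContinuousLinearMap

theorem stmt6_general (P Q : H →L[ℂ] H) (hP : IsOrthProj P) :
    (LinearMap.range ((P * Q : H →L[ℂ] H) : H →ₗ[ℂ] H)).topologicalClosure
      = LinearMap.range (P : H →ₗ[ℂ] H) ⊓ (LinearMap.range ((1 - P : H →L[ℂ] H) : H →ₗ[ℂ] H) ⊔ LinearMap.range (Q : H →ₗ[ℂ] H)).topologicalClosure :=
  ContinuousLinearMap.topologicalClosure_range_mul hP.2 Q

/-- The closure of the range of `PQ` equals `ran P ∩ (closed linear span of ran P^⊥ ∪ ran Q)`;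
equivalently, the projection onto the closure of `ran (PQ)` is `P ∧ (P^⊥ ∨ Q)`. -/
theorem stmt6 (P Q : H →L[ℂ] H) (hP : IsOrthProj P) (hQ : IsOrthProj Q) :
    (LinearMap.range ((P * Q : H →L[ℂ] H) : H →ₗ[ℂ] H)).topologicalClosure
      = LinearMap.range (P : H →ₗ[ℂ] H) ⊓ (LinearMap.range ((1 - P : H →L[ℂ] H) : H →ₗ[ℂ] H) ⊔ LinearMap.range (Q : H →ₗ[ℂ] H)).topologicalClosure :=
  stmt6_general P Q hP
end

section
/- Let H be a complex Hilbert space and A a set of orthogonal projections on H. Then A is a Boolean logic — that is, A = A^!! and the lattice operations P ∧ Q (projection onto ran P ∩ ran Q) and P ∨ Q (projection onto the closed span of ran P ∪ ran Q) restricted to A are distributive, so that P ∧ (Q ∨ R) = (P ∧ Q) ∨ (P ∧ R) for all P, Q, R ∈ A — if and only if A = A^!! and A ⊆ A^! (i.e., the elements of A pairwise commute). -/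
variable {H : Type} [NormedAddCommGroup H] [InnerProductSpace ℂ H] [CompleteSpace H]

/-- The commutant `A^!` of a set `A` of operators, taken inside the set of
orthogonal projections on `H`. -/
def projComm (A : Set (H →L[ℂ] H)) : Set (H →L[ℂ] H) :=
  {P | IsOrthProj P ∧ ∀ Q ∈ A, P * Q = Q * P}

/-! If the projections commute, `P Q` and `Q + R - Q R` are the projections onto `ran P ∩ ran Q`
and onto `ran Q + ran R` (which is therefore closed), so distributivity reduces to the ring
identity `P (Q + R - Q R) = P Q + P R - P Q P R`. Conversely, `A = A^!!` puts `1 - Q` into `A`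
together with `Q`, and distributivity for `P, Q, 1 - Q` gives
`ran P = closure ((ran P ∩ ran Q) + (ran P ∩ ker Q))`. Both summands are mapped into the closed
subspace `ran P` by `Q`, so `P Q P = Q P`; taking adjoints gives `P Q = Q P`. -/

open LinearMap

theorem IsSelfAdjoint.commute_of_mul_mul_eq {R : Type*} [Semigroup R] [StarMul R] {p t : R}
    (hp : IsSelfAdjoint p) (ht : IsSelfAdjoint t) (h : p * t * p = t * p) : Commute p t :=
  calc p * t = star (t * p) := by rw [star_mul, hp.star_eq, ht.star_eq]
    _ = star (p * t * p) := by rw [h]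
    _ = t * p := by rw [star_mul, star_mul, hp.star_eq, ht.star_eq, ← mul_assoc, h]

theorem LinearMap.range_sup_range_one_sub {R M : Type*} [Ring R] [AddCommGroup M] [Module R M]
    (q : Module.End R M) : range q ⊔ range (1 - q) = ⊤ :=
  eq_top_iff.mpr fun x _ =>
    Submodule.mem_sup.mpr ⟨q x, mem_range_self q x, (1 - q) x, mem_range_self _ x, by simp⟩

namespace LinearMap.IsIdempotentElem

variable {R M : Type*} [Ring R] [AddCommGroup M] [Module R M] {p q r : Module.End R M}

theorem range_mul_of_commute (hp : IsIdempotentElem p) (hq : IsIdempotentElem q)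
    (h : Commute p q) : range (p * q) = range p ⊓ range q := by
  refine le_antisymm (le_inf (range_comp_le_range q p) (h.eq ▸ range_comp_le_range p q)) ?_
  rintro x ⟨hxp, hxq⟩
  exact ⟨x, by rw [Module.End.mul_apply, hq.mem_range_iff.mp hxq, hp.mem_range_iff.mp hxp]⟩

theorem range_add_sub_mul_of_commute (hp : IsIdempotentElem p) (hq : IsIdempotentElem q)
    (h : Commute p q) : range (p + q - p * q) = range p ⊔ range q := by
  have hs := hp.add_sub_mul_of_commute h hq
  refine le_antisymm ?_ (sup_le ((hs.comp_eq_right_iff p).mp ?_) ((hs.comp_eq_right_iff q).mp ?_))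
  · rintro _ ⟨x, rfl⟩
    have hx : p (q x) = q (p x) := LinearMap.congr_fun h.eq x
    have : (p + q - p * q) x = p x + q (x - p x) := by simp [map_sub, hx]; abel
    exact this ▸ Submodule.add_mem_sup (mem_range_self p x) (mem_range_self q _)
  · rw [← Module.End.mul_eq_comp, sub_mul, add_mul, hp.eq, mul_assoc, ← h.eq, ← mul_assoc,
      hp.eq, h.eq]
    abel
  · rw [← Module.End.mul_eq_comp, sub_mul, add_mul, hq.eq, mul_assoc, hq.eq]
    abel

theorem range_inf_range_sup_range (hp : IsIdempotentElem p) (hq : IsIdempotentElem q)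
    (hr : IsIdempotentElem r) (hpq : Commute p q) (hpr : Commute p r) (hqr : Commute q r) :
    range p ⊓ (range q ⊔ range r) = range p ⊓ range q ⊔ range p ⊓ range r := by
  have hpqpr : Commute (p * q) (p * r) :=
    ((Commute.refl p).mul_left hpq.symm).mul_right (hpr.mul_left hqr)
  rw [← range_add_sub_mul_of_commute hq hr hqr,
    ← range_mul_of_commute hp (hq.add_sub_mul_of_commute hqr hr)
      ((hpq.add_right hpr).sub_right (hpq.mul_right hpr)),
    ← range_mul_of_commute hp hq hpq, ← range_mul_of_commute hp hr hpr,
    ← range_add_sub_mul_of_commute (hp.mul_of_commute hpq hq) (hp.mul_of_commute hpr hr) hpqpr]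
  congr 1
  have : p * q * (p * r) = p * (q * r) := by
    rw [mul_assoc, ← mul_assoc q, ← hpq.eq, mul_assoc, ← mul_assoc, hp.eq]
  rw [this]
  noncomm_ring

end LinearMap.IsIdempotentElem

namespace ContinuousLinearMap

namespace IsIdempotentElem

variable {R M : Type*} [Ring R] [TopologicalSpace M] [AddCommGroup M] [Module R M]
  [IsTopologicalAddGroup M] [T1Space M] {p q r : M →L[R] M}

theorem isClosed_range_sup_of_commute (hp : IsIdempotentElem p) (hq : IsIdempotentElem q)
    (h : Commute p q) :
    IsClosed (↑(range (p : M →ₗ[R] M) ⊔ range (q : M →ₗ[R] M)) : Set M) := by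
  rw [← LinearMap.IsIdempotentElem.range_add_sub_mul_of_commute (IsIdempotentElem.toLinearMap hp)
    (IsIdempotentElem.toLinearMap hq) (h.map toLinearMapRingHom)]
  simpa using IsIdempotentElem.isClosed_range (hp.add_sub_mul_of_commute h hq)

variable [ContinuousConstSMul R M]

theorem range_inf_topologicalClosure_sup (hp : IsIdempotentElem p) (hq : IsIdempotentElem q)
    (hr : IsIdempotentElem r) (hpq : Commute p q) (hpr : Commute p r) (hqr : Commute q r) :
    range (p : M →ₗ[R] M) ⊓
        (range (q : M →ₗ[R] M) ⊔ range (r : M →ₗ[R] M)).topologicalClosure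
      = (range (p : M →ₗ[R] M) ⊓ range (q : M →ₗ[R] M) ⊔
          range (p : M →ₗ[R] M) ⊓ range (r : M →ₗ[R] M)).topologicalClosure := by
  have hp' := IsIdempotentElem.toLinearMap hp
  have hq' := IsIdempotentElem.toLinearMap hq
  have hr' := IsIdempotentElem.toLinearMap hr
  have hpq' := hpq.map toLinearMapRingHom
  have hpr' := hpr.map toLinearMapRingHom
  have hpqpr : Commute (p * q) (p * r) :=
    ((Commute.refl p).mul_left hpq.symm).mul_right (hpr.mul_left hqr)
  rw [(isClosed_range_sup_of_commute hq hr hqr).submodule_topologicalClosure_eq,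
    LinearMap.IsIdempotentElem.range_inf_range_sup_range hp' hq' hr' hpq' hpr'
      (hqr.map toLinearMapRingHom),
    ← LinearMap.IsIdempotentElem.range_mul_of_commute hp' hq' hpq',
    ← LinearMap.IsIdempotentElem.range_mul_of_commute hp' hr' hpr',
    ← toLinearMap_mul, ← toLinearMap_mul, (isClosed_range_sup_of_commute
      (hp.mul_of_commute hpq hq) (hp.mul_of_commute hpr hr) hpqpr).submodule_topologicalClosure_eq]

theorem range_mem_invtSubmodule_of_le_topologicalClosure (hp : IsIdempotentElem p)
    (hq : IsIdempotentElem q)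
    (h : range (p : M →ₗ[R] M) ≤ (range (p : M →ₗ[R] M) ⊓ range (q : M →ₗ[R] M) ⊔
      range (p : M →ₗ[R] M) ⊓
        range ((1 - q : M →L[R] M) : M →ₗ[R] M)).topologicalClosure) :
    range (p : M →ₗ[R] M) ∈ Module.End.invtSubmodule (q : M →ₗ[R] M) := by
  refine (Module.End.mem_invtSubmodule _).mpr (h.trans (Submodule.topologicalClosure_minimal _
    (sup_le ?_ ?_) ((IsIdempotentElem.isClosed_range hp).preimage q.continuous)))
  · rintro x ⟨hxp, hxq⟩
    rwa [Submodule.mem_comap, (IsIdempotentElem.toLinearMap hq).mem_range_iff.mp hxq]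
  · rintro _ ⟨-, y, rfl⟩
    rw [Submodule.mem_comap, coe_coe, coe_coe, ← mul_apply_eq_comp, hq.mul_one_sub_self,
      _root_.zero_apply]
    exact zero_mem _

end IsIdempotentElem

end ContinuousLinearMap

theorem IsStarProjection.commute_of_range_inf_distrib {𝕜 E : Type*} [RCLike 𝕜]
    [NormedAddCommGroup E] [InnerProductSpace 𝕜 E] [CompleteSpace E] {p q : E →L[𝕜] E}
    (hp : IsStarProjection p) (hq : IsStarProjection q)
    (h : range (p : E →ₗ[𝕜] E) ⊓ (range (q : E →ₗ[𝕜] E) ⊔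
        range ((1 - q : E →L[𝕜] E) : E →ₗ[𝕜] E)).topologicalClosure
      = (range (p : E →ₗ[𝕜] E) ⊓ range (q : E →ₗ[𝕜] E) ⊔
          range (p : E →ₗ[𝕜] E) ⊓
            range ((1 - q : E →L[𝕜] E) : E →ₗ[𝕜] E)).topologicalClosure) :
    Commute p q := by
  rw [ContinuousLinearMap.toLinearMap_sub, ContinuousLinearMap.toLinearMap_one,
    range_sup_range_one_sub, isClosed_univ.submodule_topologicalClosure_eq, inf_top_eq] at h
  have hinv := ContinuousLinearMap.IsIdempotentElem.range_mem_invtSubmodule_of_le_topologicalClosure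
    hp.isIdempotentElem hq.isIdempotentElem h.le
  exact hp.isSelfAdjoint.commute_of_mul_mul_eq hq.isSelfAdjoint
    (ContinuousLinearMap.IsIdempotentElem.conj_eq_of_range_mem_invtSubmodule
      hp.isIdempotentElem hinv)

theorem isOrthProj_iff_isStarProjection {P : H →L[ℂ] H} : IsOrthProj P ↔ IsStarProjection P :=
  ⟨fun h => ⟨h.2, h.1⟩, fun h => ⟨h.2, h.1⟩⟩

theorem one_sub_mem_projComm_projComm {A : Set (H →L[ℂ] H)} {Q : H →L[ℂ] H} (hQA : Q ∈ A)
    (hQ : IsOrthProj Q) : 1 - Q ∈ projComm (projComm A) :=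
  ⟨isOrthProj_iff_isStarProjection.mpr (isOrthProj_iff_isStarProjection.mp hQ).one_sub,
    fun T hT => (Commute.one_left T).sub_left (hT.2 Q hQA).symm⟩

/-- `A` is a Boolean logic — `A = A^!!` and the lattice operations
`P ∧ Q` (projection onto `ran P ∩ ran Q`) and `P ∨ Q` (projection onto the closed span of
`ran P ∪ ran Q`) are distributive on `A` — if and only if `A = A^!!` and `A ⊆ A^!`
(the elements of `A` pairwise commute). -/
theorem stmt7 (A : Set (H →L[ℂ] H)) (hA : ∀ P ∈ A, IsOrthProj P) :
    (A = projComm (projComm A) ∧ ∀ P ∈ A, ∀ Q ∈ A, ∀ R ∈ A,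
        LinearMap.range (P : H →ₗ[ℂ] H) ⊓ (LinearMap.range (Q : H →ₗ[ℂ] H) ⊔ LinearMap.range (R : H →ₗ[ℂ] H)).topologicalClosure
          = ((LinearMap.range (P : H →ₗ[ℂ] H) ⊓ LinearMap.range (Q : H →ₗ[ℂ] H)) ⊔
              (LinearMap.range (P : H →ₗ[ℂ] H) ⊓ LinearMap.range (R : H →ₗ[ℂ] H))).topologicalClosure)
      ↔ (A = projComm (projComm A) ∧ A ⊆ projComm A) := by
  have hA' : ∀ P ∈ A, IsStarProjection P := fun P hP =>
    isOrthProj_iff_isStarProjection.mp (hA P hP)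
  refine and_congr_right fun hAA => ⟨fun hdist P hP => ⟨hA P hP, fun Q hQ => ?_⟩,
    fun hcomm P hP Q hQ R hR => ?_⟩
  · have h1Q : 1 - Q ∈ A := hAA ▸ one_sub_mem_projComm_projComm hQ (hA Q hQ)
    exact (hA' P hP).commute_of_range_inf_distrib (hA' Q hQ) (hdist P hP Q hQ _ h1Q)
  · exact ContinuousLinearMap.IsIdempotentElem.range_inf_topologicalClosure_sup
      (hA' P hP).isIdempotentElem (hA' Q hQ).isIdempotentElem (hA' R hR).isIdempotentElem
      ((hcomm hP).2 Q hQ) ((hcomm hP).2 R hR) ((hcomm hQ).2 R hR)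
end

section
/- Let P₁, P₂, Q be orthogonal projections on a complex Hilbert space H such that P₁ commutes with Q and P₂ commutes with Q. Then (P₁ ⇒ P₂) ∧ Q = [ (P₁ ∧ Q) ⇒ (P₂ ∧ Q) ] ∧ Q, where P ⇒ R denotes the Sasaki arrow P^⊥ ∨ (P ∧ R). -/
/-!
Write `K₁, K₂, L` for the ranges of `P₁, P₂, Q`. For an orthogonal projection `p` and any
subspace `N`, the Sasaki arrow `(ran p)ᗮ ⊔ (ran p ⊓ N)` is the preimage `p⁻¹(N)`: decompose
`x = (x - p x) + p x`. It is closed when `N` is, so no closure is needed, and the left-hand side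
is `{x ∈ L | P₁ x ∈ K₂}`. Since `P₁` and `Q` commute, `P₁ Q` is the projection onto `K₁ ⊓ L`, so
the right-hand side is `{x ∈ L | P₁ Q x ∈ K₂ ⊓ L}`; on `L` we have `P₁ Q x = P₁ x = Q P₁ x ∈ L`.
-/

variable {H : Type} [NormedAddCommGroup H] [InnerProductSpace ℂ H] [CompleteSpace H]

namespace ContinuousLinearMap

variable {R M : Type*} [Semiring R] [AddCommMonoid M] [Module R M] [TopologicalSpace M]
  {p q : M →L[R] M}

theorem mem_range_iff_apply_eq_self_of_isIdempotentElem (hp : IsIdempotentElem p) {x : M} :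
    x ∈ LinearMap.range (p : M →ₗ[R] M) ↔ p x = x :=
  LinearMap.IsIdempotentElem.mem_range_iff (IsIdempotentElem.toLinearMap hp)

theorem range_mul_of_commute (hp : IsIdempotentElem p) (hq : IsIdempotentElem q)
    (hpq : Commute p q) :
    LinearMap.range ((p * q : M →L[R] M) : M →ₗ[R] M)
      = LinearMap.range (p : M →ₗ[R] M) ⊓ LinearMap.range (q : M →ₗ[R] M) := by
  ext x
  simp only [Submodule.mem_inf,
    mem_range_iff_apply_eq_self_of_isIdempotentElem (hp.mul_of_commute hpq hq),
    mem_range_iff_apply_eq_self_of_isIdempotentElem hp,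
    mem_range_iff_apply_eq_self_of_isIdempotentElem hq, mul_apply_eq_comp]
  constructor
  · intro hx
    rw [← hx]
    exact ⟨congr($hp (q x)), congr($hpq.eq.symm (q x)).trans congr(p $(congr($hq x)))⟩
  · rintro ⟨hpx, hqx⟩
    rw [hqx, hpx]

theorem comap_inf_range_eq_comap_mul_inf_range (hq : IsIdempotentElem q) (hpq : Commute p q)
    (N : Submodule R M) :
    N.comap (p : M →ₗ[R] M) ⊓ LinearMap.range (q : M →ₗ[R] M)
      = (N ⊓ LinearMap.range (q : M →ₗ[R] M)).comap ((p * q : M →L[R] M) : M →ₗ[R] M)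
          ⊓ LinearMap.range (q : M →ₗ[R] M) := by
  ext x
  simp only [Submodule.mem_inf, Submodule.mem_comap, coe_coe,
    mem_range_iff_apply_eq_self_of_isIdempotentElem hq, mul_apply_eq_comp]
  refine and_congr_left fun hqx => ?_
  rw [hqx]
  exact (and_iff_left (congr($hpq.eq.symm x).trans congr(p $hqx))).symm

end ContinuousLinearMap

namespace IsStarProjection

variable {𝕜 E : Type*} [RCLike 𝕜] [NormedAddCommGroup E] [InnerProductSpace 𝕜 E]
  [CompleteSpace E] {p : E →L[𝕜] E}

theorem orthogonal_range_eq_ker (hp : IsStarProjection p) :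
    (LinearMap.range (p : E →ₗ[𝕜] E))ᗮ = LinearMap.ker (p : E →ₗ[𝕜] E) := by
  simpa [← ContinuousLinearMap.star_eq_adjoint, hp.isSelfAdjoint.star_eq] using p.orthogonal_range

theorem orthogonal_range_sup_inf_eq_comap (hp : IsStarProjection p) (N : Submodule 𝕜 E) :
    (LinearMap.range (p : E →ₗ[𝕜] E))ᗮ ⊔ (LinearMap.range (p : E →ₗ[𝕜] E) ⊓ N)
      = N.comap (p : E →ₗ[𝕜] E) := by
  rw [hp.orthogonal_range_eq_ker]
  refine le_antisymm (sup_le (fun x hx => ?_) (fun x hx => ?_)) (fun x hx => ?_)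
  · simp_all
  · rw [Submodule.mem_comap, ContinuousLinearMap.coe_coe,
      (ContinuousLinearMap.mem_range_iff_apply_eq_self_of_isIdempotentElem
        hp.isIdempotentElem).mp hx.1]
    exact hx.2
  · have hker : x - p x ∈ LinearMap.ker (p : E →ₗ[𝕜] E) := by
      have hpp : p (p x) = p x := congr($hp.isIdempotentElem.eq x)
      simp [hpp]
    rw [← sub_add_cancel x (p x)]
    exact Submodule.add_mem_sup hker ⟨LinearMap.mem_range_self _ x, hx⟩

end IsStarProjection

theorem stmt10_general (P₁ P₂ Q : H →L[ℂ] H) (h1 : IsOrthProj P₁) (h2 : IsOrthProj P₂)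
    (hQ : IsOrthProj Q) (hc1 : P₁ * Q = Q * P₁) :
    ((LinearMap.range (P₁ : H →ₗ[ℂ] H))ᗮ ⊔ (LinearMap.range (P₁ : H →ₗ[ℂ] H) ⊓ LinearMap.range (P₂ : H →ₗ[ℂ] H))).topologicalClosure
        ⊓ LinearMap.range (Q : H →ₗ[ℂ] H)
      = ((LinearMap.range (P₁ : H →ₗ[ℂ] H) ⊓ LinearMap.range (Q : H →ₗ[ℂ] H))ᗮ ⊔
          ((LinearMap.range (P₁ : H →ₗ[ℂ] H) ⊓ LinearMap.range (Q : H →ₗ[ℂ] H)) ⊓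
            (LinearMap.range (P₂ : H →ₗ[ℂ] H) ⊓ LinearMap.range (Q : H →ₗ[ℂ] H)))).topologicalClosure
        ⊓ LinearMap.range (Q : H →ₗ[ℂ] H) := by
  have hP₁ : IsStarProjection P₁ := ⟨h1.2, h1.1⟩
  have hc : Commute P₁ Q := hc1
  have hK₂ := ContinuousLinearMap.IsIdempotentElem.isClosed_range h2.2
  have hL := ContinuousLinearMap.IsIdempotentElem.isClosed_range hQ.2
  rw [hP₁.orthogonal_range_sup_inf_eq_comap,
    ← ContinuousLinearMap.range_mul_of_commute h1.2 hQ.2 hc,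
    (hP₁.mul ⟨hQ.2, hQ.1⟩ hc).orthogonal_range_sup_inf_eq_comap,
    IsClosed.submodule_topologicalClosure_eq (hK₂.preimage P₁.continuous),
    IsClosed.submodule_topologicalClosure_eq ((hK₂.inter hL).preimage (P₁ * Q).continuous),
    ContinuousLinearMap.comap_inf_range_eq_comap_mul_inf_range hQ.2 hc]

/-- If `P₁` and `P₂` commute with `Q`, then `(P₁ ⇒ P₂) ∧ Q = [(P₁ ∧ Q) ⇒ (P₂ ∧ Q)] ∧ Q`,
where `⇒` is the Sasaki arrow `P ⇒ R = P^⊥ ∨ (P ∧ R)`; stated at the level of the ranges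
of the corresponding projections (which determine the projections uniquely). -/
theorem stmt10 (P₁ P₂ Q : H →L[ℂ] H) (h1 : IsOrthProj P₁) (h2 : IsOrthProj P₂)
    (hQ : IsOrthProj Q) (hc1 : P₁ * Q = Q * P₁) (hc2 : P₂ * Q = Q * P₂) :
    ((LinearMap.range (P₁ : H →ₗ[ℂ] H))ᗮ ⊔ (LinearMap.range (P₁ : H →ₗ[ℂ] H) ⊓ LinearMap.range (P₂ : H →ₗ[ℂ] H))).topologicalClosure
        ⊓ LinearMap.range (Q : H →ₗ[ℂ] H)
      = ((LinearMap.range (P₁ : H →ₗ[ℂ] H) ⊓ LinearMap.range (Q : H →ₗ[ℂ] H))ᗮ ⊔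
          ((LinearMap.range (P₁ : H →ₗ[ℂ] H) ⊓ LinearMap.range (Q : H →ₗ[ℂ] H)) ⊓
            (LinearMap.range (P₂ : H →ₗ[ℂ] H) ⊓ LinearMap.range (Q : H →ₗ[ℂ] H)))).topologicalClosure
        ⊓ LinearMap.range (Q : H →ₗ[ℂ] H) :=
  stmt10_general P₁ P₂ Q h1 h2 hQ hc1
end

section
/- Let u, v : ℚ → B(H) be monotone families of orthogonal projections on a complex Hilbert space H (x ≤ y implies ran u(x) ⊆ ran u(y) and ran v(x) ⊆ ran v(y)) such that the union ⋃_{x∈ℚ} ran u(x) is dense in H and ⋃_{x∈ℚ} ran v(x) is dense in H. Then for every ψ ∈ H, [u(x),v(y)]ψ = 0 for all x, y ∈ ℚ if and only if [u(x),v(y)]u(z)ψ = 0 and [u(x),v(y)]v(z)ψ = 0 for all x, y, z ∈ ℚ. -/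
/-!
Monotonicity makes `u x * u z = u (min x z)`, so if every `u x` commutes with every `v y` on `ψ`,
then `[u x, v y] (u z ψ)` reduces to `[u (min x z), v y] ψ = 0`, and symmetrically for `v z ψ`.
Conversely, for `φ ∈ ran u z` we have `ψ - u z ψ = (1 - u z) (ψ - φ)` with `‖1 - u z‖ ≤ 1`,
so density of the ranges puts `ψ` in the closure of `{u z ψ}`, on which the commutator vanishes.
-/

variable {H : Type} [NormedAddCommGroup H] [InnerProductSpace ℂ H] [CompleteSpace H]

lemma IsOrthProj.isStarProjection {P : H →L[ℂ] H} (hP : IsOrthProj P) : IsStarProjection P :=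
  ⟨hP.2, hP.1⟩

namespace ContinuousLinearMap

variable {R M : Type*} [Ring R] [TopologicalSpace M] [AddCommGroup M] [Module R M]

theorem commutator_apply_eq_zero_iff [IsTopologicalAddGroup M] (a b : M →L[R] M) (ψ : M) :
    (a * b - b * a) ψ = 0 ↔ a (b ψ) = b (a ψ) := by
  rw [sub_apply, mul_apply_eq_comp, mul_apply_eq_comp, sub_eq_zero]

theorem mul_eq_right_of_range_le_s14 {p q : M →L[R] M} (hq : IsIdempotentElem q)
    (h : LinearMap.range (p : M →ₗ[R] M) ≤ LinearMap.range (q : M →ₗ[R] M)) : q * p = p := by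
  have := (LinearMap.IsIdempotentElem.comp_eq_right_iff
    (isIdempotentElem_toLinearMap_iff.mpr hq) (p : M →ₗ[R] M)).mpr h
  ext x
  exact congr($this x)

theorem apply_comm_of_apply_comm_of_mul_eq {ι : Type*} {u v : ι → M →L[R] M} {ψ : M}
    (huv : ∀ x y, u x (v y ψ) = v y (u x ψ)) {m : ι → ι → ι} (hu : ∀ x z, u x * u z = u (m x z))
    (x y z : ι) : u x (v y (u z ψ)) = v y (u x (u z ψ)) := by
  calc u x (v y (u z ψ)) = (u x * u z) (v y ψ) := by rw [mul_apply_eq_comp, huv]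
    _ = v y ((u x * u z) ψ) := by rw [hu, huv]
    _ = v y (u x (u z ψ)) := by rw [mul_apply_eq_comp]

end ContinuousLinearMap

section Projections

variable {𝕜 E : Type*} [RCLike 𝕜] [NormedAddCommGroup E] [InnerProductSpace 𝕜 E]
  [CompleteSpace E] {p q : E →L[𝕜] E}

theorem IsStarProjection.mul_eq_left_of_range_le (hp : IsStarProjection p)
    (hq : IsStarProjection q)
    (h : LinearMap.range (p : E →ₗ[𝕜] E) ≤ LinearMap.range (q : E →ₗ[𝕜] E)) : p * q = p := by
  simpa [hp.isSelfAdjoint.star_eq, hq.isSelfAdjoint.star_eq] using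
    congr(star $(ContinuousLinearMap.mul_eq_right_of_range_le_s14 hq.isIdempotentElem h))

theorem IsStarProjection.dist_apply_le (hp : IsStarProjection p) (x : E) {y : E}
    (hy : y ∈ LinearMap.range (p : E →ₗ[𝕜] E)) : dist x (p x) ≤ dist x y := by
  have hpy : p y = y := (LinearMap.IsIdempotentElem.mem_range_iff
    (ContinuousLinearMap.isIdempotentElem_toLinearMap_iff.mpr hp.isIdempotentElem)).mp hy
  have : x - p x = (1 - p) (x - y) := by simp [map_sub, hpy]
  rw [dist_eq_norm, dist_eq_norm, this]
  exact (ContinuousLinearMap.le_opNorm _ _).trans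
    (mul_le_of_le_one_left (norm_nonneg _) (IsStarProjection.norm_le _ hp.one_sub))

variable {ι : Type*} {u : ι → E →L[𝕜] E}

theorem mul_eq_min_of_monotone_range [LinearOrder ι] (hu : ∀ x, IsStarProjection (u x))
    (hmono : Monotone fun x => LinearMap.range (u x : E →ₗ[𝕜] E)) (x z : ι) :
    u x * u z = u (min x z) := by
  rcases le_total x z with h | h
  · rw [min_eq_left h, (hu x).mul_eq_left_of_range_le (hu z) (hmono h)]
  · rw [min_eq_right h,
      ContinuousLinearMap.mul_eq_right_of_range_le_s14 (hu x).isIdempotentElem (hmono h)]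

theorem mem_closure_range_apply_of_dense (hu : ∀ x, IsStarProjection (u x))
    (hd : Dense (⋃ x, (LinearMap.range (u x : E →ₗ[𝕜] E) : Set E))) (ψ : E) :
    ψ ∈ closure (Set.range fun x => u x ψ) := by
  refine Metric.mem_closure_iff.mpr fun ε hε => ?_
  obtain ⟨φ, hφ, hdist⟩ := hd.exists_dist_lt ψ hε
  obtain ⟨z, hz⟩ := Set.mem_iUnion.mp hφ
  exact ⟨u z ψ, Set.mem_range_self z, ((hu z).dist_apply_le ψ hz).trans_lt hdist⟩

end Projections

open ContinuousLinearMap in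
theorem stmt14_general (u v : ℚ → (H →L[ℂ] H))
    (hu : ∀ x, IsOrthProj (u x)) (hv : ∀ x, IsOrthProj (v x))
    (humono : ∀ x y : ℚ, x ≤ y → LinearMap.range (u x : H →ₗ[ℂ] H) ≤ LinearMap.range (u y : H →ₗ[ℂ] H))
    (hvmono : ∀ x y : ℚ, x ≤ y → LinearMap.range (v x : H →ₗ[ℂ] H) ≤ LinearMap.range (v y : H →ₗ[ℂ] H))
    (hud : Dense (⋃ x : ℚ, (LinearMap.range (u x : H →ₗ[ℂ] H) : Set H)))
    (ψ : H) :
    (∀ x y : ℚ, (u x * v y - v y * u x) ψ = 0) ↔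
      (∀ x y z : ℚ, (u x * v y - v y * u x) (u z ψ) = 0 ∧
        (u x * v y - v y * u x) (v z ψ) = 0) := by
  have hu' x := (hu x).isStarProjection
  have hv' x := (hv x).isStarProjection
  constructor
  · intro h x y z
    simp only [commutator_apply_eq_zero_iff] at h ⊢
    have hu_mul := mul_eq_min_of_monotone_range hu' fun x y => humono x y
    have hv_mul := mul_eq_min_of_monotone_range hv' fun x y => hvmono x y
    exact ⟨apply_comm_of_apply_comm_of_mul_eq h hu_mul x y z,
      (apply_comm_of_apply_comm_of_mul_eq (fun y x => (h x y).symm) hv_mul y x z).symm⟩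
  · intro h x y
    have hker : Set.range (fun z => u z ψ) ⊆ {φ | (u x * v y - v y * u x) φ = 0} := by
      rintro _ ⟨z, rfl⟩
      exact (h x y z).1
    exact closure_minimal hker (isClosed_eq (map_continuous _) continuous_const)
      (mem_closure_range_apply_of_dense hu' hud ψ)

/-- For monotone families `u, v : ℚ → B(H)` of orthogonal projections whose unions of ranges
are dense, and any `ψ ∈ H`: `[u(x),v(y)]ψ = 0` for all `x, y` if and only if
`[u(x),v(y)]u(z)ψ = 0` and `[u(x),v(y)]v(z)ψ = 0` for all `x, y, z`. -/
theorem stmt14 (u v : ℚ → (H →L[ℂ] H))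
    (hu : ∀ x, IsOrthProj (u x)) (hv : ∀ x, IsOrthProj (v x))
    (humono : ∀ x y : ℚ, x ≤ y → LinearMap.range (u x : H →ₗ[ℂ] H) ≤ LinearMap.range (u y : H →ₗ[ℂ] H))
    (hvmono : ∀ x y : ℚ, x ≤ y → LinearMap.range (v x : H →ₗ[ℂ] H) ≤ LinearMap.range (v y : H →ₗ[ℂ] H))
    (hud : Dense (⋃ x : ℚ, (LinearMap.range (u x : H →ₗ[ℂ] H) : Set H)))
    (hvd : Dense (⋃ x : ℚ, (LinearMap.range (v x : H →ₗ[ℂ] H) : Set H)))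
    (ψ : H) :
    (∀ x y : ℚ, (u x * v y - v y * u x) ψ = 0) ↔
      (∀ x y z : ℚ, (u x * v y - v y * u x) (u z ψ) = 0 ∧
        (u x * v y - v y * u x) (v z ψ) = 0) :=
  stmt14_general u v hu hv humono hvmono hud ψ
end

section
/- Let u₁, …, u_n : ℚ → B(H) be families of orthogonal projections on a complex Hilbert space H satisfying u_i(x)u_i(y) = u_i(min(x,y)) for all i and all rationals x, y. If ψ ∈ H satisfies u_i(x)ψ = u_j(x)ψ for all i, j ∈ {1,…,n} and all x ∈ ℚ, then u_i(x)u_j(y)u_k(z)ψ = u_j(y)u_i(x)u_k(z)ψ for all i, j, k ∈ {1,…,n} and all x, y, z ∈ ℚ; in particular [u_i(x), u_j(y)]u_k(z)ψ = 0. -/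
variable {H : Type} [NormedAddCommGroup H] [InnerProductSpace ℂ H] [CompleteSpace H]

/-- Let `u 1, …, u n : ℚ → B(H)` be families of orthogonal projections with
`uᵢ(x)uᵢ(y) = uᵢ(min(x,y))`.  If `ψ` satisfies `uᵢ(x)ψ = uⱼ(x)ψ` for all `i, j, x`, then
`uᵢ(x)uⱼ(y)u_k(z)ψ = uⱼ(y)uᵢ(x)u_k(z)ψ` for all `i, j, k, x, y, z`; in particular
`[uᵢ(x), uⱼ(y)]u_k(z)ψ = 0`. -/
theorem stmt15 {n : ℕ} (u : Fin n → ℚ → (H →L[ℂ] H))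
    (hu : ∀ i x, IsOrthProj (u i x))
    (huc : ∀ i x y, u i x * u i y = u i (min x y))
    (ψ : H) (heq : ∀ i j : Fin n, ∀ x : ℚ, u i x ψ = u j x ψ) :
    ∀ i j k : Fin n, ∀ x y z : ℚ,
      u i x (u j y (u k z ψ)) = u j y (u i x (u k z ψ)) ∧
      (u i x * u j y - u j y * u i x) (u k z ψ) = 0 := by
  have key : ∀ i j k : Fin n, ∀ x y z : ℚ,
      u i x (u j y (u k z ψ)) = u i (min x (min y z)) ψ := by
    intro i j k x y z
    rw [heq k j z, show u j y (u j z ψ) = (u j y * u j z) ψ from rfl, huc,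
      heq j i (min y z), show u i x (u i (min y z) ψ) = (u i x * u i (min y z)) ψ from rfl, huc]
  intro i j k x y z
  have h : u i x (u j y (u k z ψ)) = u j y (u i x (u k z ψ)) := by
    rw [key i j k x y z, key j i k y x z, min_left_comm]; exact heq i j _
  refine ⟨h, ?_⟩
  simp only [ContinuousLinearMap.sub_apply, ContinuousLinearMap.mul_apply, h, sub_self]
end
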